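/- arXiv:1104.3343 — 5 statements merged into one kernel-verified Lean document; each statement's English description precedes it below -/
import Mathlib

section
/- Let G be a Polish group and suppose G = ⋃ₙ Aₙ where each Aₙ is universally measurable. Then there exist n and finitely many elements h₁, …, hₘ ∈ G such that h₁AₙAₙ⁻¹h₁⁻¹ ∪ … ∪ hₘAₙAₙ⁻¹hₘ⁻¹ is a neighbourhood of the identity in G. -/
open MeasureTheory Set Pointwise

def UniversallyMeasurable {G : Type*} [MeasurableSpace G] (A : Set G) : Prop :=
  ∀ μ : Measure G, IsProbabilityMeasure μ → NullMeasurableSet A μ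

/-!
Suppose that for no `n` finitely many conjugates of `Aₙ Aₙ⁻¹` cover a neighbourhood of `1`.
Then one can choose `h₀, h₁, …` inductively so small that for every bit sequence `e` the
ordered products of the `h_k` with `e k = true` converge, uniformly in `e`, to `f e`; this gives
a continuous map `f` from the Cantor group `ℕ → Bool` to `G`. Flipping the `k`-th bit of `e`
multiplies `f e` on the left by a conjugate of `h_k^{±1}`, and `h_k` can be chosen so that all
these conjugates avoid `A_{n(k)} A_{n(k)}⁻¹`, where each `n` is `n(k)` for infinitely many `k`.
Pushing the Haar measure of the Cantor group forward along `f`, some `Aₙ` gets positive measure,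
so `B = f⁻¹(Aₙ)` has positive Haar measure. By Steinhaus' theorem `B - B` is a neighbourhood
of `0`, hence contains the `k`-th unit vector for all large `k`; taking such a `k` with
`n(k) = n` puts one of the forbidden conjugates into `Aₙ Aₙ⁻¹`.
-/

open Filter Topology

theorem Nat.exists_seq_of_forall_exists {α : Type*} [Nonempty α] (P : ℕ → (ℕ → α) → α → Prop)
    (hP : ∀ k s t, (∀ j < k, s j = t j) → ∀ x, P k s x → P k t x)
    (h : ∀ k s, ∃ x, P k s x) : ∃ f : ℕ → α, ∀ k, P k f (f k) := by
  let f : ℕ → α := Nat.strongRec fun k f =>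
    Classical.choose (h k fun j => if hj : j < k then f j hj else Classical.arbitrary α)
  have hf : ∀ k, P k (fun j => if j < k then f j else Classical.arbitrary α) (f k) := fun k => by
    rw [show f k = _ from Nat.strongRec_eq _ k]
    exact Classical.choose_spec (h k _)
  exact ⟨f, fun k => hP k _ f (fun j hj => if_pos hj) _ (hf k)⟩

theorem tendsto_pi_single_cofinite_nhds_zero {ι β : Type*} [DecidableEq ι] [Zero β]
    [TopologicalSpace β] (b : β) :
    Tendsto (fun i => Pi.single i b : ι → ι → β) cofinite (𝓝 0) :=
  tendsto_pi_nhds.2 fun j => tendsto_const_nhds.congr' <|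
    (eventually_cofinite_ne j).mono fun i hij => by simp [hij.symm]

theorem eventually_exists_mem_add_mem_of_tendsto_zero {G ι : Type*} [AddGroup G]
    [TopologicalSpace G] [IsTopologicalAddGroup G] [LocallyCompactSpace G] [MeasurableSpace G]
    [BorelSpace G] (μ : Measure G) [μ.IsAddHaarMeasure] [μ.InnerRegular] {B : Set G}
    (hB : NullMeasurableSet B μ) (hμB : μ B ≠ 0) {l : Filter ι} {g : ι → G}
    (hg : Tendsto g l (𝓝 0)) : ∀ᶠ i in l, ∃ e ∈ B, g i + e ∈ B := by
  obtain ⟨B₀, hB₀B, hB₀, hB₀_ae⟩ := hB.exists_measurable_subset_ae_eq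
  have hsteinhaus := Measure.sub_mem_nhds_zero_of_addHaar_pos μ B₀ hB₀
    (by rw [measure_congr hB₀_ae]; exact pos_iff_ne_zero.2 hμB)
  filter_upwards [hg hsteinhaus] with i ⟨a, ha, b, hb, hab⟩
  exact ⟨b, hB₀B hb, by simpa [← hab] using hB₀B ha⟩

theorem exists_nullMeasurableSet_preimage_ne_zero {X G : Type*} [MeasurableSpace X]
    [MeasurableSpace G] (ν : Measure X) [IsProbabilityMeasure ν] {f : X → G} (hf : Measurable f)
    {A : ℕ → Set G} (hA : ∀ n, UniversallyMeasurable (A n)) (hcover : (⋃ n, A n) = Set.univ) :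
    ∃ n, NullMeasurableSet (f ⁻¹' A n) ν ∧ ν (f ⁻¹' A n) ≠ 0 := by
  have hμ := Measure.isProbabilityMeasure_map (μ := ν) hf.aemeasurable
  obtain ⟨n, hn⟩ := exists_measure_pos_of_not_measure_iUnion_null (μ := ν.map f) (s := A)
    (by simp [hcover])
  have hAn := hA n _ hμ
  rw [Measure.map_apply₀ hf.aemeasurable hAn] at hn
  exact ⟨n, hAn.preimage (hf.quasiMeasurePreserving ν), hn.ne'⟩

section

variable {G : Type*} [Group G]

theorem exists_conj_notMem_of_forall_iUnion_conj_notMem_nhds [TopologicalSpace G] {S : Set G}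
    (hS : ∀ m (h : Fin m → G), (⋃ i, (fun x => h i * x * (h i)⁻¹) '' S) ∉ 𝓝 (1 : G))
    {F : Set G} (hF : F.Finite) {V : Set G} (hV : V ∈ 𝓝 (1 : G)) :
    ∃ x ∈ V, ∀ y ∈ F, y * x * y⁻¹ ∉ S := by
  by_contra! hVS
  have : Finite F := hF
  obtain ⟨m, ⟨σ⟩⟩ := Finite.exists_equiv_fin F
  refine hS m (fun i => (σ.symm i : G)⁻¹) (mem_of_superset hV fun x hx => ?_)
  obtain ⟨y, hy, hyx⟩ := hVS x hx
  exact mem_iUnion.2 ⟨σ ⟨y, hy⟩, _, hyx, by simp [mul_assoc]⟩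

def selectProd (s : ℕ → G) (e : ℕ → Bool) : ℕ → G
  | 0 => 1
  | k + 1 => selectProd s e k * if e k then s k else 1

theorem selectProd_congr {s t : ℕ → G} {e e' : ℕ → Bool} {k : ℕ} (hs : ∀ j < k, s j = t j)
    (he : ∀ j < k, e j = e' j) : selectProd s e k = selectProd t e' k := by
  induction k with
  | zero => rfl
  | succ k ih =>
    simp only [selectProd, hs k k.lt_succ_self, he k k.lt_succ_self,
      ih (fun j hj => hs j (by omega)) (fun j hj => he j (by omega))]

theorem isLocallyConstant_selectProd (s : ℕ → G) (k : ℕ) :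
    IsLocallyConstant fun e => selectProd s e k := by
  induction k with
  | zero => exact IsLocallyConstant.const 1
  | succ k ih =>
    exact ih.mul <| (IsLocallyConstant.of_discrete fun b : Bool => if b then s k else 1)
      |>.comp_continuous (continuous_apply k)

theorem selectProd_mul_inv_eq_of_eqOn {s : ℕ → G} {e e' : ℕ → Bool} {k m : ℕ} (hkm : k ≤ m)
    (he : ∀ j, k ≤ j → j < m → e j = e' j) :
    selectProd s e' m * (selectProd s e m)⁻¹ = selectProd s e' k * (selectProd s e k)⁻¹ := by
  induction m, hkm using Nat.le_induction with
  | base => rfl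
  | succ m hkm ih =>
    rw [← ih fun j hkj hjm => he j hkj (by omega)]
    simp only [selectProd, he m hkm m.lt_succ_self]
    group

/-- `+` on `Bool` is `xor`, so `Pi.single k true + e` is `e` with its `k`-th bit flipped. -/
theorem selectProd_add_single_mul_inv (s : ℕ → G) (e : ℕ → Bool) (k : ℕ) :
    let c := selectProd s e k * s k * (selectProd s e k)⁻¹
    selectProd s (Pi.single k true + e) (k + 1) * (selectProd s e (k + 1))⁻¹ = c ∨
      selectProd s (Pi.single k true + e) (k + 1) * (selectProd s e (k + 1))⁻¹ = c⁻¹ := by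
  have hpre : selectProd s (Pi.single k true + e) k = selectProd s e k :=
    selectProd_congr (fun _ _ => rfl) fun j hj => by simp [hj.ne]
  have hflip : (Pi.single k true + e : ℕ → Bool) k = !e k := by
    rw [Pi.add_apply, Pi.single_eq_same]
    cases e k <;> rfl
  simp only [selectProd, hpre, hflip]
  cases e k
  · left; simp
  · right; simp [mul_assoc]

theorem mul_inv_eq_of_tendsto_selectProd [TopologicalSpace G] [IsTopologicalGroup G] [T2Space G]
    {s : ℕ → G} {f : (ℕ → Bool) → G}
    (hf : ∀ e, Tendsto (selectProd s e) atTop (𝓝 (f e))) {e e' : ℕ → Bool} {k : ℕ}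
    (he : ∀ j, k ≤ j → e j = e' j) :
    f e' * (f e)⁻¹ = selectProd s e' k * (selectProd s e k)⁻¹ := by
  refine tendsto_nhds_unique ((hf e').mul (hf e).inv) (tendsto_const_nhds.congr' ?_)
  filter_upwards [eventually_ge_atTop k] with m hkm
  exact (selectProd_mul_inv_eq_of_eqOn hkm fun j hkj _ => he j hkj).symm

theorem add_single_mul_inv_of_tendsto_selectProd [TopologicalSpace G] [IsTopologicalGroup G]
    [T2Space G] {s : ℕ → G} {f : (ℕ → Bool) → G}
    (hf : ∀ e, Tendsto (selectProd s e) atTop (𝓝 (f e))) (e : ℕ → Bool) (k : ℕ) :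
    let c := selectProd s e k * s k * (selectProd s e k)⁻¹
    f (Pi.single k true + e) * (f e)⁻¹ = c ∨ f (Pi.single k true + e) * (f e)⁻¹ = c⁻¹ := by
  rw [mul_inv_eq_of_tendsto_selectProd hf (k := k + 1) fun j hj => by
    simp [Pi.single_eq_of_ne (show j ≠ k by omega)]]
  exact selectProd_add_single_mul_inv s e k

theorem exists_continuous_tendsto_selectProd [PseudoMetricSpace G] [CompleteSpace G] {s : ℕ → G}
    {d : ℕ → ℝ} (hd : Summable d)
    (hs : ∀ k e, dist (selectProd s e k * s k) (selectProd s e k) ≤ d k) :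
    ∃ f : (ℕ → Bool) → G, Continuous f ∧ ∀ e, Tendsto (selectProd s e) atTop (𝓝 (f e)) := by
  have hstep : ∀ e k, dist (selectProd s e k) (selectProd s e (k + 1)) ≤ d k := fun e k => by
    rw [selectProd, dist_comm]
    split_ifs
    · exact hs k e
    · simpa using (dist_nonneg.trans (hs k e))
  choose f hf using fun e => cauchySeq_tendsto_of_complete
    (cauchySeq_of_dist_le_of_summable d (hstep e) hd)
  refine ⟨f, ?_, hf⟩
  refine TendstoUniformly.continuous (F := fun k e => selectProd s e k) (p := atTop) ?_
    (Frequently.of_forall fun k => (isLocallyConstant_selectProd s k).continuous)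
  rw [Metric.tendstoUniformly_iff]
  intro ε hε
  filter_upwards [(tendsto_sum_nat_add d).eventually (gt_mem_nhds hε)] with k hk e
  rw [dist_comm]
  refine (dist_le_tsum_of_dist_le_of_tendsto d (hstep e) hd (hf e) k).trans_lt ?_
  simpa only [add_comm k] using hk

theorem exists_seq_conj_selectProd_notMem [PseudoMetricSpace G] [ContinuousMul G] (S : ℕ → Set G)
    (hS : ∀ k (F : Set G), F.Finite → ∀ V ∈ 𝓝 (1 : G), ∃ x ∈ V, ∀ y ∈ F, y * x * y⁻¹ ∉ S k)
    (ε : ℕ → ℝ) (hε : ∀ k, 0 < ε k) :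
    ∃ s : ℕ → G, ∀ k e, dist (selectProd s e k * s k) (selectProd s e k) ≤ ε k ∧
      selectProd s e k * s k * (selectProd s e k)⁻¹ ∉ S k := by
  refine Nat.exists_seq_of_forall_exists (fun k s x => ∀ e,
    dist (selectProd s e k * x) (selectProd s e k) ≤ ε k ∧
      selectProd s e k * x * (selectProd s e k)⁻¹ ∉ S k) ?_ fun k s => ?_
  · intro k s t hst x hx e
    rw [← selectProd_congr hst fun _ _ => rfl]
    exact hx e
  · have hF := (isLocallyConstant_selectProd s k).range_finite
    have hV : ∀ᶠ x in 𝓝 (1 : G), ∀ y ∈ range fun e => selectProd s e k, dist (y * x) y < ε k := by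
      refine (eventually_all_finite hF).2 fun y _ => Metric.tendsto_nhds.1 ?_ _ (hε k)
      simpa using ((continuous_const_mul y).tendsto 1)
    obtain ⟨x, hxV, hxS⟩ := hS k _ hF _ hV
    exact ⟨x, fun e => ⟨(hxV _ (mem_range_self e)).le, hxS _ (mem_range_self e)⟩⟩

end

/-- Christensen's theorem. -/
theorem christensen_cover
    {G : Type*} [Group G] [TopologicalSpace G] [IsTopologicalGroup G] [PolishSpace G]
    [MeasurableSpace G] [BorelSpace G] (A : ℕ → Set G)
    (hA : ∀ n, UniversallyMeasurable (A n)) (hcover : (⋃ n, A n) = Set.univ) :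
    ∃ (n : ℕ) (m : ℕ) (h : Fin m → G),
      (⋃ i : Fin m, (fun x => h i * x * (h i)⁻¹) '' (A n * (A n)⁻¹)) ∈ nhds (1 : G) := by
  by_contra! hcon
  let := TopologicalSpace.upgradeIsCompletelyMetrizable G
  obtain ⟨s, hs⟩ := exists_seq_conj_selectProd_notMem (fun k => A k.unpair.1 * (A k.unpair.1)⁻¹)
    (fun k _ hF _ hV => exists_conj_notMem_of_forall_iUnion_conj_notMem_nhds (hcon _) hF hV)
    (fun k => (1 / 2 : ℝ) ^ k) fun k => by positivity
  obtain ⟨f, hf_cont, hf⟩ := exists_continuous_tendsto_selectProd summable_geometric_two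
    fun k e => (hs k e).1
  let ν : Measure (ℕ → Bool) := Measure.addHaarMeasure ⊤
  have : IsProbabilityMeasure ν := ⟨by
    rw [← TopologicalSpace.PositiveCompacts.coe_top]
    exact Measure.addHaarMeasure_self⟩
  obtain ⟨n, hBν, hB⟩ := exists_nullMeasurableSet_preimage_ne_zero ν hf_cont.measurable hA hcover
  have hsingle : Tendsto (fun j => Pi.single (Nat.pair n j) true) atTop (𝓝 (0 : ℕ → Bool)) :=
    (Nat.cofinite_eq_atTop ▸ tendsto_pi_single_cofinite_nhds_zero true).comp
      (tendsto_atTop_mono (Nat.right_le_pair n) tendsto_id)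
  obtain ⟨j, e, he, he'⟩ := (eventually_exists_mem_add_mem_of_tendsto_zero ν
    hBν hB hsingle).exists
  have hmem : f (Pi.single (Nat.pair n j) true + e) * (f e)⁻¹ ∈ A n * (A n)⁻¹ :=
    mul_mem_mul he' (inv_mem_inv.2 he)
  refine (hs (Nat.pair n j) e).2 ?_
  rw [Nat.unpair_pair]
  rcases add_single_mul_inv_of_tendsto_selectProd hf e (Nat.pair n j) with h | h <;>
    rw [h] at hmem
  · exact hmem
  · simpa [mul_assoc] using inv_mem_inv.2 hmem
end

section
/- Let G be a Polish group and A ⊆ G a universally measurable subset which is not right Haar null. Then for every open neighbourhood W of the identity there are finitely many h₁, …, hₙ ∈ W such that h₁AA⁻¹h₁⁻¹ ∪ … ∪ hₙAA⁻¹hₙ⁻¹ is a neighbourhood of the identity. -/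
open MeasureTheory Set Pointwise

def RightHaarNull {G : Type*} [Group G] [MeasurableSpace G] (A : Set G) : Prop :=
  ∃ μ : Measure G, IsProbabilityMeasure μ ∧ ∀ z : G, μ ((fun a => a * z) '' A) = 0

/-!
Suppose the conclusion fails for `W`. Then, fixing a complete metric on `G`, one can choose
`g₀, g₁, … ∈ G` so close to `1` that every product `φ x = g₀^x₀ g₁^x₁ ⋯` with `x ∈ (ℤ/2)^ℕ`
converges, every partial product `p` has `p⁻¹ ∈ W`, and `p gₙ p⁻¹ ∉ AA⁻¹` for every partial
product `p` of length `n`: the finitely many conjugates `p⁻¹ AA⁻¹ p` do not cover a neighbourhood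
of `1`. Push the Haar measure of the Cantor group `(ℤ/2)^ℕ` forward along `φ`. As `A` is not right
Haar null, some `φ⁻¹(Az)` has positive measure, so by Steinhaus' theorem its difference set
contains a basis vector `eₙ`. This gives `x` with `xₙ = 1` such that `x` and `x - eₙ` both lie in
`φ⁻¹(Az)`, whence `p gₙ p⁻¹ = φ x φ(x - eₙ)⁻¹ ∈ AA⁻¹` for the partial product `p` of `x` of
length `n`.
-/

open Filter Topology

theorem UniversallyMeasurable.preimage {α G : Type*} [MeasurableSpace α] [MeasurableSpace G]
    {A : Set G} (hA : UniversallyMeasurable A) {f : α → G} (hf : Measurable f) :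
    UniversallyMeasurable (f ⁻¹' A) := fun μ _ =>
  (hA (μ.map f) (Measure.isProbabilityMeasure_map hf.aemeasurable)).preimage
    (hf.quasiMeasurePreserving μ)

instance isProbabilityMeasure_addHaarMeasure_top {G : Type*} [AddGroup G] [TopologicalSpace G]
    [IsTopologicalAddGroup G] [CompactSpace G] [Nonempty G] [MeasurableSpace G] [BorelSpace G] :
    IsProbabilityMeasure (Measure.addHaarMeasure (⊤ : TopologicalSpace.PositiveCompacts G)) :=
  ⟨by simpa using Measure.addHaarMeasure_self (K₀ := (⊤ : TopologicalSpace.PositiveCompacts G))⟩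

theorem tendsto_pi_single_atTop {M : Type*} [Zero M] [TopologicalSpace M] (c : M) :
    Tendsto (fun n : ℕ => (Pi.single n c : ℕ → M)) atTop (𝓝 0) :=
  tendsto_pi_nhds.2 fun i => tendsto_const_nhds.congr' <|
    (eventually_gt_atTop i).mono fun _ hn => by simp [hn.ne]

theorem eq_update_or_eq_update_of_sub_eq_single {ι : Type*} [DecidableEq ι] {x y : ι → ZMod 2}
    {n : ι} (h : x - y = Pi.single n 1) :
    (x n = 1 ∧ y = Function.update x n 0) ∨ (y n = 1 ∧ x = Function.update y n 0) := by
  have hk : ∀ k, k ≠ n → x k = y k := fun k hk => by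
    simpa [sub_eq_zero, hk] using congrFun h k
  have hn : x n - y n = 1 := by simpa using congrFun h n
  have hxy : (x n = 1 ∧ y n = 0) ∨ (y n = 1 ∧ x n = 0) := by
    revert hn; generalize x n = a; generalize y n = b; decide +revert
  rcases hxy with ⟨hx, hy⟩ | ⟨hy, hx⟩
  · exact .inl ⟨hx, Function.eq_update_iff.2 ⟨hy, fun k hkn => (hk k hkn).symm⟩⟩
  · exact .inr ⟨hy, Function.eq_update_iff.2 ⟨hx, hk⟩⟩

theorem exists_update_mem_of_measure_ne_zero (ν : Measure (ℕ → ZMod 2)) [ν.IsAddHaarMeasure]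
    {S : Set (ℕ → ZMod 2)} (hS : NullMeasurableSet S ν) (hpos : ν S ≠ 0) :
    ∃ x ∈ S, ∃ n, x n = 1 ∧ Function.update x n 0 ∈ S := by
  obtain ⟨T, hTS, hT, hTS_ae⟩ := hS.exists_measurable_subset_ae_eq
  have hsub : T - T ∈ 𝓝 0 := Measure.sub_mem_nhds_zero_of_addHaar_pos ν T hT
    (by rwa [measure_congr hTS_ae, pos_iff_ne_zero])
  obtain ⟨n, x, hx, y, hy, hxy⟩ := ((tendsto_pi_single_atTop 1).eventually_mem hsub).exists
  rcases eq_update_or_eq_update_of_sub_eq_single hxy with ⟨hxn, rfl⟩ | ⟨hyn, rfl⟩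
  · exact ⟨x, hTS hx, n, hxn, hTS hy⟩
  · exact ⟨y, hTS hy, n, hyn, hTS hx⟩

theorem exists_mul_inv_update_mem_of_not_rightHaarNull {G : Type*} [Group G] [TopologicalSpace G]
    [ContinuousMul G] [MeasurableSpace G] [BorelSpace G] {A : Set G}
    (hA : UniversallyMeasurable A) (hnull : ¬ RightHaarNull A) {φ : (ℕ → ZMod 2) → G}
    (hφ : Measurable φ) :
    ∃ x n, x n = 1 ∧ φ x * (φ (Function.update x n 0))⁻¹ ∈ A * A⁻¹ := by
  set ν := Measure.addHaarMeasure (⊤ : TopologicalSpace.PositiveCompacts (ℕ → ZMod 2))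
  have hμ : IsProbabilityMeasure (ν.map φ) := Measure.isProbabilityMeasure_map hφ.aemeasurable
  obtain ⟨z, hz⟩ : ∃ z, ν.map φ ((· * z) '' A) ≠ 0 := by
    by_contra! h
    exact hnull ⟨ν.map φ, hμ, h⟩
  have hAz : UniversallyMeasurable ((· * z) '' A) := by
    rw [image_mul_right]
    exact hA.preimage (continuous_mul_const z⁻¹).measurable
  rw [Measure.map_apply₀ hφ.aemeasurable (hAz _ hμ)] at hz
  obtain ⟨x, ⟨a, ha, hax⟩, n, hxn, b, hb, hbx⟩ :=
    exists_update_mem_of_measure_ne_zero ν (hAz.preimage hφ ν inferInstance) hz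
  refine ⟨x, n, hxn, ?_⟩
  rw [← hax, ← hbx]
  simpa [mul_assoc] using mul_mem_mul ha (inv_mem_inv.2 hb)

section PartialProd

variable {M : Type*} [Monoid M]

def partialProd (g : ℕ → M) (x : ℕ → ZMod 2) : ℕ → M
  | 0 => 1
  | m + 1 => partialProd g x m * if x m = 1 then g m else 1

theorem partialProd_succ (g : ℕ → M) (x : ℕ → ZMod 2) (m : ℕ) :
    partialProd g x (m + 1) = partialProd g x m * if x m = 1 then g m else 1 := rfl

theorem partialProd_update_of_le (g : ℕ → M) (x : ℕ → ZMod 2) {m n : ℕ} (h : m ≤ n)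
    (a : ZMod 2) : partialProd g (Function.update x n a) m = partialProd g x m := by
  induction m with
  | zero => rfl
  | succ m ih =>
    rw [partialProd_succ, partialProd_succ, ih (by omega), Function.update_of_ne (by omega)]

theorem continuous_partialProd [TopologicalSpace M] [ContinuousMul M] (g : ℕ → M) (m : ℕ) :
    Continuous fun x => partialProd g x m := by
  induction m with
  | zero => exact continuous_const
  | succ m ih =>
    exact ih.mul <| continuous_of_discreteTopology.comp (continuous_apply m)
      (g := fun a : ZMod 2 => if a = 1 then g m else 1)

theorem exists_forall_partialProd {Q : M → Prop} {R : ℕ → M → M → Prop} (h1 : Q 1)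
    (hstep : ∀ P : List M, (∀ p ∈ P, Q p) → ∀ m, ∃ t, ∀ p ∈ P, Q (p * t) ∧ R m p t) :
    ∃ g : ℕ → M, ∀ x m, R m (partialProd g x m) (g m) := by
  choose! step hstep using hstep
  let stage : ℕ → List M := fun m => Nat.rec [1] (fun m P => P ++ P.map (· * step P m)) m
  have hstage : ∀ m, ∀ p ∈ stage m, Q p := by
    intro m
    induction m with
    | zero => simpa [stage] using h1
    | succ m ih =>
      simp only [stage, List.mem_append, List.mem_map]
      rintro p (hp | ⟨q, hq, rfl⟩)
      exacts [ih p hp, (hstep _ ih m q hq).1]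
  refine ⟨fun m => step (stage m) m, fun x m => (hstep _ (hstage m) m _ ?_).2⟩
  induction m with
  | zero => simp [stage, partialProd]
  | succ m ih =>
    rw [partialProd_succ]
    split_ifs
    · exact List.mem_append_right _ (List.mem_map_of_mem ih)
    · rw [mul_one]
      exact List.mem_append_left _ ih

end PartialProd

section InfiniteProd

variable {G : Type*} [Group G]

theorem partialProd_mul_inv_update (g : ℕ → G) {x : ℕ → ZMod 2} {n : ℕ} (hx : x n = 1) {m : ℕ}
    (hm : n < m) :
    partialProd g x m * (partialProd g (Function.update x n 0) m)⁻¹ =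
      partialProd g x n * g n * (partialProd g x n)⁻¹ := by
  induction m, hm using Nat.le_induction with
  | base => simp [partialProd_succ, partialProd_update_of_le, hx, mul_assoc]
  | succ m hm ih =>
    rw [partialProd_succ, partialProd_succ, Function.update_of_ne (by omega), ← ih]
    group

theorem mul_inv_update_eq_of_tendsto_partialProd [TopologicalSpace G] [IsTopologicalGroup G]
    [T2Space G] (g : ℕ → G) {φ : (ℕ → ZMod 2) → G}
    (hφ : ∀ x, Tendsto (partialProd g x) atTop (𝓝 (φ x))) {x : ℕ → ZMod 2} {n : ℕ}
    (hx : x n = 1) :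
    φ x * (φ (Function.update x n 0))⁻¹ = partialProd g x n * g n * (partialProd g x n)⁻¹ :=
  tendsto_nhds_unique ((hφ x).mul (hφ _).inv) <| tendsto_const_nhds.congr' <|
    (eventually_gt_atTop n).mono fun _ hm => (partialProd_mul_inv_update g hx hm).symm

theorem exists_tendsto_partialProd [MetricSpace G] [CompleteSpace G] {g : ℕ → G}
    (hg : ∀ x m, dist (partialProd g x m) (partialProd g x m * g m) ≤ (1 / 2) ^ m)
    (x : ℕ → ZMod 2) : ∃ a, Tendsto (partialProd g x) atTop (𝓝 a) := by
  refine cauchySeq_tendsto_of_complete (cauchySeq_of_le_geometric_two (C := 2) fun m => ?_)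
  rw [partialProd_succ]
  split_ifs
  · simpa [div_eq_mul_inv] using hg x m
  · simp

theorem exists_forall_mem_conj_notMem [MetricSpace G] [IsTopologicalGroup G] {W D : Set G}
    (hW : IsOpen W)
    (hD : ∀ (n : ℕ) (h : Fin n → G), (∀ i, h i ∈ W) →
      (⋃ i, (fun x => h i * x * (h i)⁻¹) '' D) ∉ 𝓝 1)
    (P : List G) (hP : ∀ p ∈ P, p⁻¹ ∈ W) {ε : ℝ} (hε : 0 < ε) :
    ∃ t, ∀ p ∈ P, (p * t)⁻¹ ∈ W ∧ dist p (p * t) < ε ∧ p * t * p⁻¹ ∉ D := by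
  have hnear : ∀ᶠ t in 𝓝 (1 : G), ∀ p ∈ P, (p * t)⁻¹ ∈ W ∧ dist p (p * t) < ε := by
    refine (P.finite_toSet.eventually_all).2 fun p hp => ?_
    have hW' : ∀ᶠ t in 𝓝 (1 : G), (p * t)⁻¹ ∈ W :=
      (by fun_prop : Continuous fun t => (p * t)⁻¹).continuousAt.eventually_mem
        (hW.mem_nhds (by simpa using hP p hp))
    have hdist : Tendsto (fun t => dist p (p * t)) (𝓝 1) (𝓝 0) := by
      simpa using ((continuous_const (y := p)).dist (continuous_const_mul p)).tendsto (1 : G)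
    exact hW'.and (hdist.eventually_lt_const hε)
  obtain ⟨t, ht, htD⟩ : ∃ t, (∀ p ∈ P, (p * t)⁻¹ ∈ W ∧ dist p (p * t) < ε) ∧
      t ∉ ⋃ i, (fun x => (P.get i)⁻¹ * x * (P.get i)⁻¹⁻¹) '' D := by
    by_contra! h
    exact hD P.length (fun i => (P.get i)⁻¹) (fun i => hP _ (List.get_mem P i))
      (mem_of_superset hnear h)
  refine ⟨t, fun p hp => ⟨(ht p hp).1, (ht p hp).2, fun hD => htD ?_⟩⟩
  obtain ⟨i, rfl⟩ := List.mem_iff_get.1 hp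
  exact mem_iUnion.2 ⟨i, _, hD, by group⟩

end InfiniteProd

theorem christensen_local
    {G : Type*} [Group G] [TopologicalSpace G] [IsTopologicalGroup G] [PolishSpace G]
    [MeasurableSpace G] [BorelSpace G] (A : Set G)
    (hA : UniversallyMeasurable A) (hnull : ¬ RightHaarNull A) :
    ∀ W : Set G, IsOpen W → (1 : G) ∈ W →
      ∃ (n : ℕ) (h : Fin n → G), (∀ i, h i ∈ W) ∧
        (⋃ i : Fin n, (fun x => h i * x * (h i)⁻¹) '' (A * A⁻¹)) ∈ nhds (1 : G) := by
  intro W hW hW1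
  by_contra! hcon
  let := TopologicalSpace.upgradeIsCompletelyMetrizable G
  obtain ⟨g, hg⟩ := exists_forall_partialProd (Q := fun p : G => p⁻¹ ∈ W)
    (R := fun m p t => dist p (p * t) < (1 / 2) ^ m ∧ p * t * p⁻¹ ∉ A * A⁻¹) (by simpa using hW1)
    fun P hP m => exists_forall_mem_conj_notMem hW hcon P hP (by positivity)
  choose φ hφ using exists_tendsto_partialProd fun x m => (hg x m).1.le
  have hφm : Measurable φ := measurable_of_tendsto_metrizable
    (fun m => (continuous_partialProd g m).measurable) (tendsto_pi_nhds.2 hφ)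
  obtain ⟨x, n, hxn, hmem⟩ := exists_mul_inv_update_mem_of_not_rightHaarNull hA hnull hφm
  rw [mul_inv_update_eq_of_tendsto_partialProd g hφ hxn] at hmem
  exact (hg x n).2 hmem
end

section
/- Let G be a group, F ≤ G a subgroup, and g₁, …, gₙ ∈ G. Suppose that G can be covered by countably many sets of the form dFgᵢ with d ranging over a countable set D and i ≤ n, i.e., G = DFg₁ ∪ … ∪ DFgₙ for some countable D ⊆ G. Then F has countable index in G. -/
/-!
Since `d F gᵢ = (d gᵢ) (gᵢ⁻¹ F gᵢ)`, the group is covered by countably many left cosets of the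
finitely many conjugates `gᵢ⁻¹ F gᵢ`, each of which has the same index as `F`. For such covers
B. H. Neumann's argument applies: take one of the subgroups `K`. Either its cosets in the cover
already cover the group, and then `K` has countable index, or some coset `x K` misses all of them;
then `x K` is covered by cosets of the other subgroups, hence so is every translate `c K`, and
`K` can be removed from the cover. Induction on the number of subgroups concludes.
-/

open Set Pointwise

namespace Subgroup

variable {G : Type*} [Group G]

def IsCosetCover (C : Set (G × Subgroup G)) : Prop :=
  ∀ z : G, ∃ p ∈ C, z ∈ p.1 • (p.2 : Set G)

theorem mem_smul_coe_iff_mk_eq {K : Subgroup G} {x c : G} :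
    x ∈ c • (K : Set G) ↔ (x : G ⧸ K) = c := by
  rw [← QuotientGroup.eq_class_eq_leftCoset]
  rfl

theorem countable_quotient_of_forall_mem_smul {K : Subgroup G} {T : Set G} (hT : T.Countable)
    (hcover : ∀ x, ∃ c ∈ T, x ∈ c • (K : Set G)) : Countable (G ⧸ K) := by
  have himage : ((↑) : G → G ⧸ K) '' T = univ := eq_univ_of_forall fun q => by
    induction q using QuotientGroup.induction_on with
    | H x =>
      obtain ⟨c, hc, hx⟩ := hcover x
      exact ⟨c, hc, (mem_smul_coe_iff_mk_eq.1 hx).symm⟩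
  exact countable_univ_iff.1 (himage ▸ hT.image _)

theorem countable_quotient_of_comap_conj {F : Subgroup G} (g : G)
    [Countable (G ⧸ F.comap (MulAut.conj g).toMonoidHom)] : Countable (G ⧸ F) := by
  refine Function.Surjective.countable (f := fun q : G ⧸ F.comap (MulAut.conj g).toMonoidHom =>
    Quotient.map' (· * g⁻¹) (fun a b hab => ?_) q) ?_
  · rw [QuotientGroup.leftRel_apply] at hab ⊢
    simpa [mul_assoc] using hab
  · intro q
    induction q using QuotientGroup.induction_on with
    | H x => exact ⟨(x * g : G), congrArg QuotientGroup.mk (mul_inv_cancel_right x g)⟩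

theorem mul_mul_mem_smul_comap_conj {F : Subgroup G} {f : G} (hf : f ∈ F) (d g : G) :
    d * f * g ∈ (d * g) • (F.comap (MulAut.conj g).toMonoidHom : Set G) := by
  rw [mem_leftCoset_iff]
  simpa [mul_assoc] using hf

def eraseCosets (C : Set (G × Subgroup G)) (K : Subgroup G) (x : G) : Set (G × Subgroup G) :=
  {q ∈ C | q.2 ≠ K} ∪ image2 (fun p q => (p.1 * x⁻¹ * q.1, q.2)) C {q ∈ C | q.2 ≠ K}

theorem countable_eraseCosets {C : Set (G × Subgroup G)} (hC : C.Countable) (K : Subgroup G)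
    (x : G) : (eraseCosets C K x).Countable :=
  (hC.mono (sep_subset _ _)).union (hC.image2 (hC.mono (sep_subset _ _)) _)

theorem snd_mem_erase_of_mem_eraseCosets [DecidableEq (Subgroup G)] {S : Finset (Subgroup G)}
    {C : Set (G × Subgroup G)} (hCS : ∀ p ∈ C, p.2 ∈ S) {K : Subgroup G} {x : G} :
    ∀ q ∈ eraseCosets C K x, q.2 ∈ S.erase K := by
  rintro _ (⟨hq, hqK⟩ | ⟨p, -, q, ⟨hq, hqK⟩, rfl⟩)
  · exact Finset.mem_erase.2 ⟨hqK, hCS _ hq⟩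
  · exact Finset.mem_erase.2 ⟨hqK, hCS q hq⟩

/-- `x • K` meets no coset of `K` in `C`, so it is covered by cosets of the other subgroups;
translating that cover by `c * x⁻¹` covers `c • K`. -/
theorem IsCosetCover.eraseCosets {C : Set (G × Subgroup G)} (hcover : IsCosetCover C)
    {K : Subgroup G} {x : G} (hx : ∀ c, (c, K) ∈ C → x ∉ c • (K : Set G)) :
    IsCosetCover (eraseCosets C K x) := by
  intro z
  obtain ⟨p, hp, hz⟩ := hcover z
  by_cases hpK : p.2 = K
  · have hy : x * p.1⁻¹ * z ∈ x • (K : Set G) := by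
      rw [mem_leftCoset_iff, ← hpK]
      rw [mem_leftCoset_iff] at hz
      simpa [mul_assoc] using hz
    obtain ⟨⟨c, H⟩, hq, hyq⟩ := hcover (x * p.1⁻¹ * z)
    have hHK : H ≠ K := by
      rintro rfl
      exact hx c hq (mem_smul_coe_iff_mk_eq.2
        ((mem_smul_coe_iff_mk_eq.1 hy).symm.trans (mem_smul_coe_iff_mk_eq.1 hyq)))
    refine ⟨(p.1 * x⁻¹ * c, H), Or.inr (mem_image2_of_mem hp (b := (c, H)) ⟨hq, hHK⟩), ?_⟩
    rw [mem_leftCoset_iff] at hyq ⊢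
    convert hyq using 1
    group
  · exact ⟨p, Or.inl ⟨hp, hpK⟩, hz⟩

/-- Countable form of B. H. Neumann's lemma. -/
theorem exists_countable_quotient_of_isCosetCover (S : Finset (Subgroup G))
    {C : Set (G × Subgroup G)} (hC : C.Countable) (hCS : ∀ p ∈ C, p.2 ∈ S)
    (hcover : IsCosetCover C) : ∃ K ∈ S, Countable (G ⧸ K) := by
  classical
  induction S using Finset.strongInduction generalizing C with
  | H S ih =>
  obtain ⟨p, hp, -⟩ := hcover 1
  by_cases hK : ∀ x, ∃ c ∈ (·, p.2) ⁻¹' C, x ∈ c • (p.2 : Set G)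
  · exact ⟨p.2, hCS p hp,
      countable_quotient_of_forall_mem_smul (hC.preimage (Prod.mk_left_injective p.2)) hK⟩
  · push Not at hK
    obtain ⟨x, hx⟩ := hK
    obtain ⟨K, hK, hKc⟩ := ih (S.erase p.2) (Finset.erase_ssubset (hCS p hp))
      (countable_eraseCosets hC p.2 x) (snd_mem_erase_of_mem_eraseCosets hCS)
      (hcover.eraseCosets hx)
    exact ⟨K, Finset.mem_of_mem_erase hK, hKc⟩

end Subgroup

theorem countable_index_of_cover
    {G : Type*} [Group G] (F : Subgroup G) {n : ℕ} (g : Fin n → G) (D : Set G)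
    (hD : D.Countable)
    (hcover : (⋃ i : Fin n, D * (F : Set G) * {g i}) = Set.univ) :
    Countable (G ⧸ F) := by
  classical
  let H : Fin n → Subgroup G := fun i => F.comap (MulAut.conj (g i)).toMonoidHom
  let C : Set (G × Subgroup G) := image2 (fun d i => (d * g i, H i)) D univ
  have hC : C.Countable := hD.image2 countable_univ _
  have hCS : ∀ p ∈ C, p.2 ∈ Finset.univ.image H := by
    rintro _ ⟨d, -, i, -, rfl⟩
    exact Finset.mem_image_of_mem H (Finset.mem_univ i)
  have hCcover : Subgroup.IsCosetCover C := by
    intro z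
    have hz : z ∈ ⋃ i, D * (F : Set G) * {g i} := hcover ▸ mem_univ z
    simp only [mem_iUnion, mem_mul, mem_singleton_iff] at hz
    obtain ⟨i, _, ⟨d, hd, f, hf, rfl⟩, _, rfl, rfl⟩ := hz
    exact ⟨_, mem_image2_of_mem hd (mem_univ i), Subgroup.mul_mul_mem_smul_comap_conj hf d (g i)⟩
  obtain ⟨K, hK, hKc⟩ := Subgroup.exists_countable_quotient_of_isCosetCover _ hC hCS hCcover
  obtain ⟨i, -, rfl⟩ := Finset.mem_image.1 hK
  exact Subgroup.countable_quotient_of_comap_conj (g i)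
end

section
/- Let G be a group and H₁, …, Hₙ ≤ G subgroups such that G = C₁ ∪ … ∪ Cₘ where each Cⱼ is a left coset of some Hᵢ. Then some Hᵢ has finite index in G. -/
open Set Pointwise

/-- B. H. Neumann's lemma. -/
theorem neumann_lemma {G : Type*} [Group G] {n m : ℕ}
    (H : Fin n → Subgroup G) (C : Fin m → Set G)
    (hcoset : ∀ j : Fin m, ∃ (i : Fin n) (a : G), C j = a • (H i : Set G))
    (hcover : (⋃ j : Fin m, C j) = Set.univ) :
    ∃ i : Fin n, (H i).FiniteIndex := by
  choose f a hfa using hcoset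
  obtain ⟨k, -, hk⟩ := Subgroup.exists_finiteIndex_of_leftCoset_cover (H := H ∘ f) (g := a)
    (s := Finset.univ) (by simpa [hfa] using hcover)
  exact ⟨f k, hk⟩
end

section
/- Let G be a Polish group and N ≤ G a universally measurable normal subgroup of countable index. Then N is open in G. -/
open MeasureTheory Set

/-!
If `N` is not open, it is not a neighbourhood of `1`, so with respect to a complete metric one can
pick `g n ∉ N` so close to `1` that for every `e : ℕ → ZMod 2` the ordered products
`∏_{i<n} g i ^ e i` converge, to `T e` say. Flipping the `k`-th bit of `e` multiplies `T e` on the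
left by a conjugate of `g k ^ (±1)`, which by normality of `N` changes the coset `T e N`. So no
fibre of `e ↦ T e N` contains two points differing in one coordinate, and by Steinhaus' theorem
for the Haar probability measure of the Cantor group `ℕ → ZMod 2` every fibre is null (the fibres
are null-measurable because `N` is universally measurable). Countably many null fibres cannot
cover the Cantor group.
-/

open Filter Topology Pointwise TopologicalSpace

theorem tendsto_pi_single_atTop_zero {A : Type*} [Zero A] [TopologicalSpace A] (a : A) :
    Tendsto (fun k : ℕ => (Pi.single k a : ℕ → A)) atTop (𝓝 0) := by
  refine tendsto_pi_nhds.2 fun j => tendsto_const_nhds.congr' ?_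
  filter_upwards [eventually_gt_atTop j] with k hk
  exact (Pi.single_eq_of_ne (M := fun _ => A) hk.ne a).symm

theorem exists_mem_add_single_mem (μ : Measure (ℕ → ZMod 2)) [μ.IsAddHaarMeasure]
    [μ.InnerRegular] {E : Set (ℕ → ZMod 2)} (hE : NullMeasurableSet E μ) (hμE : μ E ≠ 0) :
    ∃ e ∈ E, ∃ k, e + Pi.single k 1 ∈ E := by
  obtain ⟨F, hFE, hF, hFE_ae⟩ := hE.exists_measurable_subset_ae_eq
  have hF_pos : 0 < μ F := by rw [measure_congr hFE_ae]; exact pos_iff_ne_zero.2 hμE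
  obtain ⟨k, a, ha, b, hb, hab⟩ := ((tendsto_pi_single_atTop_zero (1 : ZMod 2)).eventually_mem
    (Measure.sub_mem_nhds_zero_of_addHaar_pos μ F hF hF_pos)).exists
  refine ⟨b, hFE hb, k, hFE ?_⟩
  rwa [← hab, add_sub_cancel]

section CantorProd

variable {G : Type*} [Group G]

def cantorProd (g : ℕ → G) (e : ℕ → ZMod 2) (n : ℕ) : G :=
  ((List.range n).map fun i => g i ^ (e i).val).prod

@[simp]
theorem cantorProd_zero (g : ℕ → G) (e : ℕ → ZMod 2) : cantorProd g e 0 = 1 := rfl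

theorem cantorProd_succ (g : ℕ → G) (e : ℕ → ZMod 2) (n : ℕ) :
    cantorProd g e (n + 1) = cantorProd g e n * g n ^ (e n).val := by
  simp [cantorProd, List.range_succ]

theorem cantorProd_congr {g g' : ℕ → G} {e e' : ℕ → ZMod 2} {n : ℕ}
    (hg : ∀ i < n, g i = g' i) (he : ∀ i < n, e i = e' i) :
    cantorProd g e n = cantorProd g' e' n := by
  refine congrArg List.prod (List.map_congr_left fun i hi => ?_)
  rw [List.mem_range] at hi
  rw [hg i hi, he i hi]

theorem finite_range_cantorProd (g : ℕ → G) (n : ℕ) :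
    (range fun e => cantorProd g e n).Finite := by
  induction n with
  | zero => simp
  | succ n ih =>
    refine (ih.mul (finite_range fun x : ZMod 2 => g n ^ x.val)).subset ?_
    rintro _ ⟨e, rfl⟩
    exact ⟨_, ⟨e, rfl⟩, _, ⟨_, rfl⟩, (cantorProd_succ g e n).symm⟩

theorem cantorProd_mul_inv_cantorProd_of_le {g : ℕ → G} {e e' : ℕ → ZMod 2} {n m : ℕ}
    (he : ∀ i ≥ n, e i = e' i) (hnm : n ≤ m) :
    cantorProd g e' m * (cantorProd g e m)⁻¹ = cantorProd g e' n * (cantorProd g e n)⁻¹ := by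
  induction m, hnm using Nat.le_induction with
  | base => rfl
  | succ m hm ih => simp [cantorProd_succ, he m hm, mul_assoc, ih]

theorem cantorProd_add_single_mul_inv_mem_iff (g : ℕ → G) (e : ℕ → ZMod 2) (k : ℕ)
    {N : Subgroup G} [N.Normal] :
    cantorProd g (e + Pi.single k 1) (k + 1) * (cantorProd g e (k + 1))⁻¹ ∈ N ↔ g k ∈ N := by
  have h_prefix : cantorProd g (e + Pi.single k 1) k = cantorProd g e k :=
    cantorProd_congr (fun _ _ => rfl) fun i hi => by simp [Pi.single_eq_of_ne hi.ne]
  have h_flip : ∀ x : ZMod 2, g k ^ (x + 1).val * (g k ^ x.val)⁻¹ ∈ N ↔ g k ∈ N := by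
    intro x
    have h_val_one : ZMod.val (1 : ZMod 2) = 1 := rfl
    obtain rfl | rfl : x = 0 ∨ x = 1 := by revert x; decide
    · simp [h_val_one]
    · simp [show (1 + 1 : ZMod 2) = 0 from rfl, h_val_one]
  set A := cantorProd g e k
  rw [cantorProd_succ, cantorProd_succ, h_prefix, ← h_flip (e k)]
  rw [show ∀ a b : G, A * a * (A * b)⁻¹ = A * (a * b⁻¹ * A⁻¹) from fun a b => by group,
    ‹N.Normal›.mem_comm_iff, inv_mul_cancel_right]
  simp

theorem continuous_cantorProd [TopologicalSpace G] [ContinuousMul G] (g : ℕ → G) (n : ℕ) :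
    Continuous fun e => cantorProd g e n := by
  induction n with
  | zero => exact continuous_const
  | succ n ih =>
    simp only [cantorProd_succ]
    exact ih.mul ((continuous_of_discreteTopology (f := fun x : ZMod 2 => g n ^ x.val)).comp
      (continuous_apply n))

theorem cauchySeq_cantorProd [PseudoMetricSpace G] {g : ℕ → G}
    (hg : ∀ n e, dist (cantorProd g e n * g n) (cantorProd g e n) ≤ (1 / 2) ^ n)
    (e : ℕ → ZMod 2) : CauchySeq (cantorProd g e) := by
  refine cauchySeq_of_le_geometric (1 / 2) 1 (by norm_num) fun n => ?_
  rw [one_mul, dist_comm, cantorProd_succ]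
  obtain h | h : (e n).val = 0 ∨ (e n).val = 1 := by have := ZMod.val_lt (e n); omega
  · simp [h]
  · simpa [h] using hg n e

theorem exists_notMem_forall_dist_mul_lt [PseudoMetricSpace G] [ContinuousMul G] {s : Set G}
    (hs : s ∉ 𝓝 1) {S : Set G} (hS : S.Finite) {ε : ℝ} (hε : 0 < ε) :
    ∃ x ∉ s, ∀ w ∈ S, dist (w * x) w < ε := by
  have h_near : ∀ᶠ x in 𝓝 1, ∀ w ∈ S, dist (w * x) w < ε :=
    (eventually_all_finite hS).2 fun w _ =>
      Metric.tendsto_nhds.1 ((continuous_const_mul w).tendsto' 1 w (mul_one w)) ε hε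
  obtain ⟨x, hx, hxs⟩ := (h_near.and_frequently (not_eventually.1 hs)).exists
  exact ⟨x, hxs, hx⟩

/-- The metric need not be left-invariant, so `g n` has to be chosen after `g 0, …, g (n - 1)`:
it must move each of the finitely many partial products below `n` by less than `ε n`. -/
theorem exists_forall_notMem_dist_cantorProd_mul_lt [PseudoMetricSpace G] [ContinuousMul G]
    {s : Set G} (hs : s ∉ 𝓝 1) {ε : ℕ → ℝ} (hε : ∀ n, 0 < ε n) :
    ∃ g : ℕ → G, ∀ n, g n ∉ s ∧ ∀ e, dist (cantorProd g e n * g n) (cantorProd g e n) < ε n := by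
  choose pick h_pick_notMem h_pick_dist using fun (n : ℕ) (prev : ℕ → G) =>
    exists_notMem_forall_dist_mul_lt hs (finite_range_cantorProd prev n) (hε n)
  let g : ℕ → G := Nat.strongRec fun n prev => pick n fun i => if h : i < n then prev i h else 1
  have hg : ∀ n, g n = pick n fun i => if i < n then g i else 1 := fun n => by
    simp only [g]; rw [Nat.strongRec_eq]; simp only [dite_eq_ite]
  refine ⟨g, fun n => ⟨hg n ▸ h_pick_notMem _ _, fun e => ?_⟩⟩
  rw [hg n, cantorProd_congr (g' := fun i => if i < n then g i else 1)
    (fun i hi => (if_pos hi).symm) fun _ _ => rfl]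
  exact h_pick_dist _ _ _ ⟨e, rfl⟩

end CantorProd

section InfiniteProduct

variable {G : Type*} [Group G] [TopologicalSpace G] {g : ℕ → G} {T : (ℕ → ZMod 2) → G}

theorem mk_eq_mk_add_single_iff_of_tendsto_cantorProd [IsTopologicalGroup G] [T2Space G]
    {N : Subgroup G} [N.Normal] (hT : ∀ e, Tendsto (cantorProd g e) atTop (𝓝 (T e)))
    (e : ℕ → ZMod 2) (k : ℕ) : (T e : G ⧸ N) = T (e + Pi.single k 1) ↔ g k ∈ N := by
  have h_tail : ∀ i ≥ k + 1, e i = (e + Pi.single k 1 : ℕ → ZMod 2) i := fun i hi => by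
    simp [Pi.single_eq_of_ne (Nat.succ_le_iff.1 hi).ne']
  have h_lim : T (e + Pi.single k 1) * (T e)⁻¹ =
      cantorProd g (e + Pi.single k 1) (k + 1) * (cantorProd g e (k + 1))⁻¹ :=
    tendsto_nhds_unique ((hT _).mul (hT e).inv) <| tendsto_const_nhds.congr' <|
      eventually_atTop.2 ⟨k + 1, fun m hm => (cantorProd_mul_inv_cantorProd_of_le h_tail hm).symm⟩
  rw [QuotientGroup.eq, ‹N.Normal›.mem_comm_iff, h_lim, cantorProd_add_single_mul_inv_mem_iff]

theorem measurable_of_tendsto_cantorProd [ContinuousMul G] [PseudoMetrizableSpace G]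
    [MeasurableSpace G] [BorelSpace G] (hT : ∀ e, Tendsto (cantorProd g e) atTop (𝓝 (T e))) :
    Measurable T :=
  measurable_of_tendsto_metrizable (fun n => (continuous_cantorProd g n).measurable)
    (tendsto_pi_nhds.2 hT)

end InfiniteProduct

theorem UniversallyMeasurable.nullMeasurableSet_preimage {X G : Type*} [MeasurableSpace X]
    [MeasurableSpace G] {A : Set G} (hA : UniversallyMeasurable A) {f : X → G}
    (hf : Measurable f) (μ : Measure X) [IsProbabilityMeasure μ] :
    NullMeasurableSet (f ⁻¹' A) μ :=
  (hA _ (Measure.isProbabilityMeasure_map hf.aemeasurable)).preimage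
    (hf.quasiMeasurePreserving μ)

theorem UniversallyMeasurable.exists_mk_eq_mk_add_single {G : Type*} [Group G]
    [MeasurableSpace G] [MeasurableMul G] {N : Subgroup G} [Countable (G ⧸ N)]
    (hN : UniversallyMeasurable (N : Set G)) {T : (ℕ → ZMod 2) → G} (hT : Measurable T) :
    ∃ e k, (T e : G ⧸ N) = T (e + Pi.single k 1) := by
  let μ := Measure.addHaarMeasure (⊤ : PositiveCompacts (ℕ → ZMod 2))
  have : IsProbabilityMeasure μ := ⟨Measure.addHaarMeasure_self⟩
  by_contra! hT_flip
  have h_fibre : ∀ c : G ⧸ N, μ ((fun e => (T e : G ⧸ N)) ⁻¹' {c}) = 0 := by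
    intro c
    obtain ⟨x, rfl⟩ := QuotientGroup.mk_surjective c
    have h_eq : (fun e => (T e : G ⧸ N)) ⁻¹' {(x : G ⧸ N)} = (fun e => x⁻¹ * T e) ⁻¹' N := by
      ext e
      simp [eq_comm, QuotientGroup.eq]
    by_contra hne
    obtain ⟨e, he, k, hek⟩ := exists_mem_add_single_mem μ
      (h_eq ▸ hN.nullMeasurableSet_preimage (hT.const_mul _) μ) hne
    exact hT_flip e k (he.trans hek.symm)
  have h_univ := measure_iUnion_null h_fibre
  rw [← preimage_iUnion, iUnion_of_singleton, preimage_univ, measure_univ] at h_univ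
  exact one_ne_zero h_univ

theorem univMeasurable_normal_countableIndex_isOpen
    {G : Type*} [Group G] [TopologicalSpace G] [IsTopologicalGroup G] [PolishSpace G]
    [MeasurableSpace G] [BorelSpace G] (N : Subgroup G) [N.Normal]
    (hN : UniversallyMeasurable (N : Set G)) (hindex : Countable (G ⧸ N)) :
    IsOpen (N : Set G) := by
  by_contra h_open
  let := upgradeIsCompletelyMetrizable G
  have hN_nhds : (N : Set G) ∉ 𝓝 1 := fun h => h_open (N.isOpen_of_mem_nhds h)
  obtain ⟨g, hg⟩ := exists_forall_notMem_dist_cantorProd_mul_lt hN_nhds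
    (ε := fun n => (1 / 2 : ℝ) ^ n) fun n => by positivity
  have hT : ∀ e, Tendsto (cantorProd g e) atTop (𝓝 (limUnder atTop (cantorProd g e))) :=
    fun e => (cauchySeq_cantorProd (fun n e => ((hg n).2 e).le) e).tendsto_limUnder
  obtain ⟨e, k, hek⟩ := hN.exists_mk_eq_mk_add_single (measurable_of_tendsto_cantorProd hT)
  exact (hg k).1 ((mk_eq_mk_add_single_iff_of_tendsto_cantorProd hT e k).1 hek)
end
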